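/- The group Υ is generated by the matrices n(z,x) together with their transposes n(z,x)ᵀ, as z ranges over ℤ[ζ] and x over the integers with x ≡ N(z) mod 2. -/

import Mathlib

open Matrix Complex
open scoped ComplexOrder

noncomputable section

/-- `SLC n` is the special linear group of `n × n` complex matrices. -/
abbrev SLC (n : ℕ) := Matrix.SpecialLinearGroup (Fin n) ℂ

/-- The standard Hermitian matrix of signature `(d,1)` used to define `SU(d,1)`:
`J_{1,d+1} = J_{d+1,1} = 1`, `J_{i,i} = 1` for `2 ≤ i ≤ d` (1-indexed), and `0` otherwise. -/
def Jmat (d : ℕ) : Matrix (Fin (d+1)) (Fin (d+1)) ℂ :=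
  Matrix.of fun i j =>
    if (i = 0 ∧ j = Fin.last d) ∨ (i = Fin.last d ∧ j = 0) then 1
    else if i = j ∧ i ≠ 0 ∧ i ≠ Fin.last d then 1 else 0

/-- `SU(d,1)`, realised as the subgroup of `SL_{d+1}(ℂ)` preserving the Hermitian
form given by `Jmat d`. -/
def SUd1 (d : ℕ) : Subgroup (SLC (d+1)) where
  carrier := {g | (↑g : Matrix (Fin (d+1)) (Fin (d+1)) ℂ)ᴴ * Jmat d * ↑g = Jmat d}
  one_mem' := by simp
  mul_mem' := by
    intro a b ha hb
    simp only [Set.mem_setOf_eq] at ha hb ⊢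
    rw [Matrix.SpecialLinearGroup.coe_mul, Matrix.conjTranspose_mul]
    calc (↑b)ᴴ * (↑a)ᴴ * Jmat d * ((↑a : Matrix (Fin (d+1)) (Fin (d+1)) ℂ) * ↑b)
        = (↑b)ᴴ * ((↑a : Matrix (Fin (d+1)) (Fin (d+1)) ℂ)ᴴ * Jmat d * ↑a) * ↑b := by
          simp only [Matrix.mul_assoc]
      _ = Jmat d := by rw [ha]; exact hb
  inv_mem' := by
    intro a ha
    simp only [Set.mem_setOf_eq] at ha ⊢
    set A : Matrix (Fin (d+1)) (Fin (d+1)) ℂ := ↑a with hA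
    set B : Matrix (Fin (d+1)) (Fin (d+1)) ℂ := ↑(a⁻¹) with hB
    have h1 : A * B = 1 := by
      rw [hA, hB, ← Matrix.SpecialLinearGroup.coe_mul, mul_inv_cancel]
      simp
    calc Bᴴ * Jmat d * B
        = Bᴴ * (Aᴴ * Jmat d * A) * B := by rw [ha]
      _ = (A * B)ᴴ * Jmat d * (A * B) := by
          rw [Matrix.conjTranspose_mul]; simp only [Matrix.mul_assoc]
      _ = Jmat d := by rw [h1]; simp

/-- The Hermitian form `⟨v,w⟩ = conj(v)ᵀ J w` on `ℂ^{d+1}`. -/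
def Hform (d : ℕ) (v w : Fin (d+1) → ℂ) : ℂ := star v ⬝ᵥ (Jmat d *ᵥ w)

/-- The symmetric space `ℋ = {τ ∈ ℂ^d : ⟨(τ;1),(τ;1)⟩ < 0}`. -/
def Hdom (d : ℕ) : Set (Fin d → ℂ) :=
  {τ | Hform d (Fin.snoc τ 1) (Fin.snoc τ 1) < 0}

/-- The automorphy factor `j(g,τ) = Cτ + D`. -/
def jfun (d : ℕ) (g : Matrix (Fin (d+1)) (Fin (d+1)) ℂ) (τ : Fin d → ℂ) : ℂ :=
  (g *ᵥ Fin.snoc τ 1) (Fin.last d)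

/-- The action `g*τ = (Cτ+D)⁻¹ (Aτ+B)` of `SU(d,1)` on `ℋ`. -/
def actH (d : ℕ) (g : Matrix (Fin (d+1)) (Fin (d+1)) ℂ) (τ : Fin d → ℂ) : Fin d → ℂ :=
  fun k => (g *ᵥ Fin.snoc τ 1) (Fin.castSucc k) / jfun d g τ

open scoped Classical in
/-- `X(g) = -g_{d+1,1}` if `g_{d+1,1} ≠ 0`, and `g_{d+1,d+1}` otherwise. -/
def Xfun (d : ℕ) (g : Matrix (Fin (d+1)) (Fin (d+1)) ℂ) : ℂ :=
  if g (Fin.last d) 0 = 0 then g (Fin.last d) (Fin.last d) else -(g (Fin.last d) 0)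

/-- The branch `j̃(g,τ) = Log(j(g,τ)/X(g)) + Log(X(g))` of the logarithm of `j(g,τ)`,
where `Log` is the principal branch (imaginary part in `(-π, π]`). -/
def jtilde (d : ℕ) (g : Matrix (Fin (d+1)) (Fin (d+1)) ℂ) (τ : Fin d → ℂ) : ℂ :=
  Complex.log (jfun d g τ / Xfun d g) + Complex.log (Xfun d g)

/-- A base point of `ℋ` (for `d ≥ 1`). -/
def baseTau (d : ℕ) : Fin d → ℂ := fun i => if (i : ℕ) = 0 then -1 else 0

/-- The 2-cocycle `σ(g,h) = (1/(2πi))(j̃(gh,τ) − j̃(g,h*τ) − j̃(h,τ))`, evaluated at the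
base point of `ℋ` (as proved in the paper, the value is an integer and does not depend
on the choice of `τ ∈ ℋ`). -/
def sigmaC (d : ℕ) (g h : Matrix (Fin (d+1)) (Fin (d+1)) ℂ) : ℂ :=
  (jtilde d (g * h) (baseTau d) - jtilde d g (actH d h (baseTau d)) - jtilde d h (baseTau d)) /
    (2 * Real.pi * Complex.I)

/-- The integer-valued 2-cocycle `σ` on `SU(d,1)` classifying its universal cover. -/
def sigmaZ (d : ℕ) (g h : Matrix (Fin (d+1)) (Fin (d+1)) ℂ) : ℤ := round (sigmaC d g h).re

/-- The primitive cube root of unity `ζ = e^{2πi/3}`. -/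
def zeta3 : ℂ := Complex.exp (2 * Real.pi * Complex.I / 3)

lemma zeta3_pow_three : zeta3 ^ 3 = 1 := by
  rw [zeta3, ← Complex.exp_nat_mul]
  rw [show (3 : ℕ) * (2 * ↑Real.pi * Complex.I / 3) = 2 * ↑Real.pi * Complex.I by
    push_cast; ring]
  exact Complex.exp_two_pi_mul_I

lemma zeta3_ne_one : zeta3 ≠ 1 := by
  have him : zeta3.im = Real.sin (2 * Real.pi / 3) := by
    rw [zeta3, show 2 * (Real.pi : ℂ) * Complex.I / 3 = (2 * Real.pi / 3 : ℝ) * Complex.I by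
      push_cast; ring]
    rw [Complex.exp_ofReal_mul_I_im]
  have hpos : 0 < Real.sin (2 * Real.pi / 3) := by
    apply Real.sin_pos_of_pos_of_lt_pi
    · positivity
    · nlinarith [Real.pi_pos]
  intro h
  rw [h] at him
  simp only [Complex.one_im] at him
  linarith

lemma zeta3_quad : zeta3 ^ 2 + zeta3 + 1 = 0 := by
  have h : (zeta3 - 1) * (zeta3 ^ 2 + zeta3 + 1) = 0 := by
    have : (zeta3 - 1) * (zeta3 ^ 2 + zeta3 + 1) = zeta3 ^ 3 - 1 := by ring
    rw [this, zeta3_pow_three, sub_self]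
  rcases mul_eq_zero.mp h with h1 | h2
  · exact absurd (sub_eq_zero.mp h1) zeta3_ne_one
  · exact h2

lemma zeta3_conj : starRingEnd ℂ zeta3 = zeta3 ^ 2 := by
  have habs : ‖zeta3‖ = 1 := by
    rw [zeta3, show 2 * (Real.pi : ℂ) * Complex.I / 3 = (2 * Real.pi / 3 : ℝ) * Complex.I by
      push_cast; ring]
    exact Complex.norm_exp_ofReal_mul_I _
  have h1 : starRingEnd ℂ zeta3 * zeta3 = 1 := by
    rw [mul_comm, Complex.mul_conj, Complex.normSq_eq_norm_sq, habs]; norm_num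
  have h2 : zeta3 ^ 2 * zeta3 = 1 := by
    rw [← pow_succ, zeta3_pow_three]
  have hz : zeta3 ≠ 0 := by
    intro h
    rw [h] at habs; simp at habs
  exact mul_right_cancel₀ hz (h1.trans h2.symm)

/-- The ring of Eisenstein integers `ℤ[ζ]`, as a subring of `ℂ`. -/
def Eis : Subring ℂ := Subring.closure {zeta3}

lemma zeta3_mem_Eis : zeta3 ∈ Eis := Subring.subset_closure rfl

lemma Eis_conj_mem {x : ℂ} (hx : x ∈ Eis) : starRingEnd ℂ x ∈ Eis := by
  induction hx using Subring.closure_induction with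
  | mem y hy =>
      rcases hy with rfl
      rw [zeta3_conj]
      exact pow_mem zeta3_mem_Eis 2
  | zero => simpa using Eis.zero_mem
  | one => simpa using Eis.one_mem
  | add a b _ _ ha hb => rw [map_add]; exact Eis.add_mem ha hb
  | neg a _ ha => rw [map_neg]; exact Eis.neg_mem ha
  | mul a b _ _ ha hb => rw [_root_.map_mul]; exact Eis.mul_mem ha hb

/-- The square root `√-3 = 2ζ + 1` of `-3` in `ℤ[ζ]`. -/
def sqrt3 : ℂ := 2 * zeta3 + 1

lemma sqrt3_mem_Eis : sqrt3 ∈ Eis := by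
  refine Eis.add_mem (Eis.mul_mem ?_ zeta3_mem_Eis) Eis.one_mem
  rw [show (2 : ℂ) = 1 + 1 by norm_num]
  exact Eis.add_mem Eis.one_mem Eis.one_mem

lemma sqrt3_sq : sqrt3 * sqrt3 = -3 := by
  have h := zeta3_quad
  rw [sqrt3]; ring_nf; linear_combination 4 * h
/-- The set of multiples of `c` by Eisenstein integers (e.g. the ideal `√-3·ℤ[ζ]` of `ℤ[ζ]`,
viewed inside `ℂ`). -/
def mulSet (c : ℂ) : Set ℂ := {x | ∃ y ∈ Eis, x = c * y}

lemma mulSet_zero (c : ℂ) : (0 : ℂ) ∈ mulSet c := ⟨0, Eis.zero_mem, by ring⟩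

lemma mulSet_add {c x y : ℂ} (hx : x ∈ mulSet c) (hy : y ∈ mulSet c) :
    x + y ∈ mulSet c := by
  obtain ⟨a, ha, rfl⟩ := hx; obtain ⟨b, hb, rfl⟩ := hy
  exact ⟨a + b, Eis.add_mem ha hb, by ring⟩

lemma mulSet_neg {c x : ℂ} (hx : x ∈ mulSet c) : -x ∈ mulSet c := by
  obtain ⟨a, ha, rfl⟩ := hx
  exact ⟨-a, Eis.neg_mem ha, by ring⟩

lemma mulSet_mul_left {c x y : ℂ} (hx : x ∈ Eis) (hy : y ∈ mulSet c) :
    x * y ∈ mulSet c := by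
  obtain ⟨a, ha, rfl⟩ := hy
  exact ⟨x * a, Eis.mul_mem hx ha, by ring⟩

lemma mulSet_mul_right {c x y : ℂ} (hx : x ∈ mulSet c) (hy : y ∈ Eis) :
    x * y ∈ mulSet c := by
  obtain ⟨a, ha, rfl⟩ := hx
  exact ⟨a * y, Eis.mul_mem ha hy, by ring⟩

lemma sqrt3_mul_sqrt3 {x y : ℂ} (hx : x ∈ mulSet sqrt3) (hy : y ∈ mulSet sqrt3) :
    x * y ∈ mulSet 3 := by
  obtain ⟨a, ha, rfl⟩ := hx; obtain ⟨b, hb, rfl⟩ := hy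
  refine ⟨-(a * b), Eis.neg_mem (Eis.mul_mem ha hb), ?_⟩
  have h := sqrt3_sq
  linear_combination a * b * h

lemma three_subset_sqrt3 {x : ℂ} (hx : x ∈ mulSet 3) : x ∈ mulSet sqrt3 := by
  obtain ⟨a, ha, rfl⟩ := hx
  refine ⟨-(sqrt3 * a), Eis.neg_mem (Eis.mul_mem sqrt3_mem_Eis ha), ?_⟩
  have h := sqrt3_sq
  linear_combination a * h

lemma Jmat2_entries_mem : ∀ i j, Jmat 2 i j ∈ Eis := by
  intro i j
  rw [Jmat]
  dsimp only [Matrix.of_apply]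
  split_ifs <;> first | exact Eis.one_mem | exact Eis.zero_mem

lemma entries_mul_mem {A B : Matrix (Fin 3) (Fin 3) ℂ}
    (hA : ∀ i j, A i j ∈ Eis) (hB : ∀ i j, B i j ∈ Eis) :
    ∀ i j, (A * B) i j ∈ Eis := by
  intro i j
  rw [Matrix.mul_apply]
  exact Subring.sum_mem _ fun k _ => Eis.mul_mem (hA i k) (hB k j)

lemma Jmat2_mul_self : Jmat 2 * Jmat 2 = 1 := by
  ext i j
  rw [Matrix.mul_apply, Fin.sum_univ_three]
  fin_cases i <;> fin_cases j <;>
    simp [Jmat, Matrix.one_apply, Fin.last]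

/-- The group `Γ = {g ∈ SL₃(ℤ[ζ]) : conj(g)ᵀ J g = J}`, a subgroup of `SU(2,1)`. -/
def GammaEis : Subgroup (SLC 3) where
  carrier := {g | (∀ i j, (↑g : Matrix (Fin 3) (Fin 3) ℂ) i j ∈ Eis) ∧
    (↑g : Matrix (Fin 3) (Fin 3) ℂ)ᴴ * Jmat 2 * ↑g = Jmat 2}
  one_mem' := by
    constructor
    · intro i j
      rw [Matrix.SpecialLinearGroup.coe_one, Matrix.one_apply]
      split_ifs <;> first | exact Eis.one_mem | exact Eis.zero_mem
    · simp
  mul_mem' := by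
    intro a b ha hb
    obtain ⟨ha1, ha2⟩ := ha; obtain ⟨hb1, hb2⟩ := hb
    constructor
    · intro i j
      rw [Matrix.SpecialLinearGroup.coe_mul]
      exact entries_mul_mem ha1 hb1 i j
    · rw [Matrix.SpecialLinearGroup.coe_mul, Matrix.conjTranspose_mul]
      calc (↑b)ᴴ * (↑a)ᴴ * Jmat 2 * ((↑a : Matrix (Fin 3) (Fin 3) ℂ) * ↑b)
          = (↑b)ᴴ * ((↑a : Matrix (Fin 3) (Fin 3) ℂ)ᴴ * Jmat 2 * ↑a) * ↑b := by
            simp only [Matrix.mul_assoc]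
        _ = Jmat 2 := by rw [ha2]; exact hb2
  inv_mem' := by
    intro a ha
    obtain ⟨ha1, ha2⟩ := ha
    set A : Matrix (Fin 3) (Fin 3) ℂ := ↑a with hA
    set B : Matrix (Fin 3) (Fin 3) ℂ := ↑(a⁻¹) with hB
    have hAB : A * B = 1 := by
      rw [hA, hB, ← Matrix.SpecialLinearGroup.coe_mul, mul_inv_cancel]; simp
    have hJJ := Jmat2_mul_self
    have hform : B = Jmat 2 * Aᴴ * Jmat 2 := by
      have h1 : (Jmat 2 * Aᴴ * Jmat 2) * A = 1 := by
        calc (Jmat 2 * Aᴴ * Jmat 2) * A = Jmat 2 * (Aᴴ * Jmat 2 * A) := by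
              simp only [Matrix.mul_assoc]
          _ = Jmat 2 * Jmat 2 := by rw [ha2]
          _ = 1 := hJJ
      calc B = 1 * B := (Matrix.one_mul _).symm
        _ = ((Jmat 2 * Aᴴ * Jmat 2) * A) * B := by rw [h1]
        _ = (Jmat 2 * Aᴴ * Jmat 2) * (A * B) := by simp only [Matrix.mul_assoc]
        _ = Jmat 2 * Aᴴ * Jmat 2 := by rw [hAB, Matrix.mul_one]
    have hAH : ∀ i j, Aᴴ i j ∈ Eis := by
      intro i j
      rw [Matrix.conjTranspose_apply]
      exact Eis_conj_mem (ha1 j i)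
    have hBent : ∀ i j, B i j ∈ Eis := by
      rw [hform]
      exact entries_mul_mem (entries_mul_mem Jmat2_entries_mem hAH) Jmat2_entries_mem
    constructor
    · exact hBent
    · calc Bᴴ * Jmat 2 * B
          = Bᴴ * (Aᴴ * Jmat 2 * A) * B := by rw [ha2]
        _ = (A * B)ᴴ * Jmat 2 * (A * B) := by
            rw [Matrix.conjTranspose_mul]; simp only [Matrix.mul_assoc]
        _ = Jmat 2 := by rw [hAB]; simp
/-- The principal congruence subgroup `Γ(√-3)` of level `√-3` in `GammaEis`. -/
def GammaS3 : Subgroup (SLC 3) where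
  carrier := {g | g ∈ GammaEis ∧
    ∀ i j, ((↑g : Matrix (Fin 3) (Fin 3) ℂ) i j - (1 : Matrix (Fin 3) (Fin 3) ℂ) i j)
      ∈ mulSet sqrt3}
  one_mem' := ⟨GammaEis.one_mem, by intro i j; simp [mulSet_zero]⟩
  mul_mem' := by
    intro a b ha hb
    refine ⟨GammaEis.mul_mem ha.1 hb.1, ?_⟩
    intro i j
    set A : Matrix (Fin 3) (Fin 3) ℂ := ↑a with hA
    set B : Matrix (Fin 3) (Fin 3) ℂ := ↑b with hB
    have key : A * B - 1 = (A - 1) * (B - 1) + (A - 1) + (B - 1) := by noncomm_ring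
    have : ((↑(a * b) : Matrix (Fin 3) (Fin 3) ℂ) i j - (1 : Matrix (Fin 3) (Fin 3) ℂ) i j)
        = ((A - 1) * (B - 1)) i j + (A - 1) i j + (B - 1) i j := by
      rw [Matrix.SpecialLinearGroup.coe_mul, ← Matrix.sub_apply, key]
      simp [Matrix.add_apply]
    rw [this]
    have hprod : ((A - 1) * (B - 1)) i j ∈ mulSet sqrt3 := by
      rw [Matrix.mul_apply]
      refine Finset.sum_induction _ _ (fun x y hx hy => mulSet_add hx hy) (mulSet_zero _) ?_
      intro k _
      refine three_subset_sqrt3 (sqrt3_mul_sqrt3 ?_ ?_)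
      · simpa [Matrix.sub_apply] using ha.2 i k
      · simpa [Matrix.sub_apply] using hb.2 k j
    refine mulSet_add (mulSet_add hprod ?_) ?_
    · simpa [Matrix.sub_apply] using ha.2 i j
    · simpa [Matrix.sub_apply] using hb.2 i j
  inv_mem' := by
    intro a ha
    refine ⟨GammaEis.inv_mem ha.1, ?_⟩
    intro i j
    set A : Matrix (Fin 3) (Fin 3) ℂ := ↑a with hA
    set B : Matrix (Fin 3) (Fin 3) ℂ := ↑(a⁻¹) with hB
    have hBA : B * A = 1 := by
      rw [hA, hB, ← Matrix.SpecialLinearGroup.coe_mul, inv_mul_cancel]; simp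
    have key : B - 1 = B * (1 - A) := by rw [Matrix.mul_sub, Matrix.mul_one, hBA]
    have hBent : ∀ i j, B i j ∈ Eis := ((GammaEis.inv_mem ha.1).1 : _)
    have : (B i j - (1 : Matrix (Fin 3) (Fin 3) ℂ) i j) = (B * (1 - A)) i j := by
      rw [← key]; simp [Matrix.sub_apply]
    rw [this, Matrix.mul_apply]
    refine Finset.sum_induction _ _ (fun x y hx hy => mulSet_add hx hy) (mulSet_zero _) ?_
    intro k _
    refine mulSet_mul_left (hBent i k) ?_
    have : (1 - A) k j = -(A k j - (1 : Matrix (Fin 3) (Fin 3) ℂ) k j) := by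
      simp [Matrix.sub_apply]
    rw [this]
    exact mulSet_neg (ha.2 k j)

/-- The index 3 subgroup `Υ = {g ∈ Γ(√-3) : g₁₁ ≡ 1 mod 3}` of `Γ(√-3)`. -/
def Upsilon : Subgroup (SLC 3) where
  carrier := {g | g ∈ GammaS3 ∧ ((↑g : Matrix (Fin 3) (Fin 3) ℂ) 0 0 - 1) ∈ mulSet 3}
  one_mem' := ⟨GammaS3.one_mem, by simp [mulSet_zero]⟩
  mul_mem' := by
    intro a b ha hb
    refine ⟨GammaS3.mul_mem ha.1 hb.1, ?_⟩
    set A : Matrix (Fin 3) (Fin 3) ℂ := ↑a with hA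
    set B : Matrix (Fin 3) (Fin 3) ℂ := ↑b with hB
    have hAe : ∀ i j, A i j ∈ Eis := ha.1.1.1
    have hBe : ∀ i j, B i j ∈ Eis := hb.1.1.1
    have hoffA : ∀ i j, i ≠ j → A i j ∈ mulSet sqrt3 := by
      intro i j hij
      have := ha.1.2 i j
      simpa [Matrix.one_apply, hij] using this
    have hoffB : ∀ i j, i ≠ j → B i j ∈ mulSet sqrt3 := by
      intro i j hij
      have := hb.1.2 i j
      simpa [Matrix.one_apply, hij] using this
    have hmul : (↑(a * b) : Matrix (Fin 3) (Fin 3) ℂ) 0 0 - 1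
        = (A 0 0 - 1) * (B 0 0 - 1) + (A 0 0 - 1) + (B 0 0 - 1)
          + A 0 1 * B 1 0 + A 0 2 * B 2 0 := by
      rw [Matrix.SpecialLinearGroup.coe_mul, Matrix.mul_apply, Fin.sum_univ_three]
      ring
    rw [hmul]
    refine mulSet_add (mulSet_add (mulSet_add (mulSet_add ?_ ha.2) hb.2) ?_) ?_
    · exact mulSet_mul_right ha.2 (Eis.sub_mem (hBe 0 0) Eis.one_mem)
    · exact sqrt3_mul_sqrt3 (hoffA 0 1 (by decide)) (hoffB 1 0 (by decide))
    · exact sqrt3_mul_sqrt3 (hoffA 0 2 (by decide)) (hoffB 2 0 (by decide))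
  inv_mem' := by
    intro a ha
    have hinv : a⁻¹ ∈ GammaS3 := GammaS3.inv_mem ha.1
    refine ⟨hinv, ?_⟩
    set A : Matrix (Fin 3) (Fin 3) ℂ := ↑a with hA
    set B : Matrix (Fin 3) (Fin 3) ℂ := ↑(a⁻¹) with hB
    have hBA : B * A = 1 := by
      rw [hA, hB, ← Matrix.SpecialLinearGroup.coe_mul, inv_mul_cancel]; simp
    have hBe : ∀ i j, B i j ∈ Eis := hinv.1.1
    have hoffA : ∀ i j, i ≠ j → A i j ∈ mulSet sqrt3 := by
      intro i j hij
      have := ha.1.2 i j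
      simpa [Matrix.one_apply, hij] using this
    have hoffB : ∀ i j, i ≠ j → B i j ∈ mulSet sqrt3 := by
      intro i j hij
      have := hinv.2 i j
      simpa [Matrix.one_apply, hij, -Matrix.SpecialLinearGroup.coe_inv] using this
    have h00 : B 0 0 * A 0 0 + B 0 1 * A 1 0 + B 0 2 * A 2 0 = 1 := by
      have := congrArg (fun M : Matrix (Fin 3) (Fin 3) ℂ => M 0 0) hBA
      simpa [Matrix.mul_apply, Fin.sum_univ_three, Matrix.one_apply] using this
    have key : B 0 0 - 1
        = -(B 0 0 * (A 0 0 - 1)) + -(B 0 1 * A 1 0) + -(B 0 2 * A 2 0) := by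
      linear_combination h00
    rw [key]
    refine mulSet_add (mulSet_add ?_ ?_) ?_
    · exact mulSet_neg (mulSet_mul_left (hBe 0 0) ha.2)
    · exact mulSet_neg (sqrt3_mul_sqrt3 (hoffB 0 1 (by decide)) (hoffA 1 0 (by decide)))
    · exact mulSet_neg (sqrt3_mul_sqrt3 (hoffB 0 2 (by decide)) (hoffA 2 0 (by decide)))
/-- The unipotent upper-triangular matrix `n(z,x)`. -/
def nMat (z : ℂ) (x : ℤ) : Matrix (Fin 3) (Fin 3) ℂ :=
  !![1, sqrt3 * z, (-3 * (z * starRingEnd ℂ z) + (x : ℂ) * sqrt3) / 2;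
     0, 1, sqrt3 * starRingEnd ℂ z;
     0, 0, 1]

/-- `n(z,x)` as an element of `SL₃(ℂ)`. -/
def nSL (z : ℂ) (x : ℤ) : SLC 3 :=
  ⟨nMat z x, by
    simp [nMat, Matrix.det_fin_three, Matrix.vecHead, Matrix.vecTail]⟩

/-- The transpose `n(z,x)ᵀ` as an element of `SL₃(ℂ)`. -/
def ntSL (z : ℂ) (x : ℤ) : SLC 3 :=
  ⟨(nMat z x)ᵀ, by
    rw [Matrix.det_transpose]
    simp [nMat, Matrix.det_fin_three, Matrix.vecHead, Matrix.vecTail]⟩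

/-- The congruence `x ≡ N(z) mod 2` (inside `ℤ[ζ]`). -/
def parityOK (z : ℂ) (x : ℤ) : Prop := ((x : ℂ) - z * starRingEnd ℂ z) ∈ mulSet 2

/-- The generating set of `Υ`: the matrices `n(z,x)` and their transposes, for
`z ∈ ℤ[ζ]` and `x ∈ ℤ` with `x ≡ N(z) mod 2`. -/
def genSet : Set (SLC 3) :=
  {g | ∃ (z : ℂ) (x : ℤ), z ∈ Eis ∧ parityOK z x ∧ (g = nSL z x ∨ g = ntSL z x)}

/-- The scalar matrix `ζ·I₃` as an element of `SL₃(ℂ)`. -/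
def zISL : SLC 3 :=
  ⟨zeta3 • (1 : Matrix (Fin 3) (Fin 3) ℂ), by
    rw [Matrix.det_smul]
    simp [zeta3_pow_three]⟩

/-- The centre `μ₃ = {I₃, ζI₃, ζ²I₃}` of `SU(2,1)`, generated by `ζ·I₃`. -/
def muThree : Subgroup (SLC 3) := Subgroup.zpowers zISL

/-!
Both kinds of generators lie in `Υ` (transposition preserves `Υ`). Conversely, induct on the
norm `N(c)` of the bottom-left entry `c` of `g ∈ Υ`, with bottom row `(c, d, e)`. If `c = 0`,
the relations `gᴴJg = gJgᴴ = J` force `g = n(z,x)`. Otherwise, since `ℤ[ζ]` has covering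
radius `1/√3`, right multiplication by a suitable `n(z,x)` yields a row `(c, d', e')` with
`N(d') ≤ N(c)` and `|Im(e'/c)| ≤ √3/2`; isotropy of the row, `2 N(c) Re(e'/c) = -N(d')`, then
gives `N(e') ≤ N(c)`, strictly because `N(c) ≡ 0` and `N(e') ≡ 1 mod 3`. The same step for the
reversed row, with some `n(w,y)ᵀ`, produces a bottom-left entry of norm `≤ N(e') < N(c)`.
-/

local notation:1024 "↑ₘ" A:1024 => ((A : SLC 3) : Matrix (Fin 3) (Fin 3) ℂ)

lemma zeta3_eq : zeta3 = -1 / 2 + (Real.sqrt 3 / 2 : ℝ) * I := by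
  have hcos : Real.cos (2 * Real.pi / 3) = -1 / 2 := by
    rw [show 2 * Real.pi / 3 = Real.pi - Real.pi / 3 by ring, Real.cos_pi_sub,
      Real.cos_pi_div_three]; norm_num
  have hsin : Real.sin (2 * Real.pi / 3) = Real.sqrt 3 / 2 := by
    rw [show 2 * Real.pi / 3 = Real.pi - Real.pi / 3 by ring, Real.sin_pi_sub,
      Real.sin_pi_div_three]
  rw [zeta3, show 2 * (Real.pi : ℂ) * I / 3 = ((2 * Real.pi / 3 : ℝ) : ℂ) * I by push_cast; ring,
    exp_mul_I, ← ofReal_cos, ← ofReal_sin, hcos, hsin]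
  push_cast; ring

lemma sqrt3_eq : sqrt3 = (Real.sqrt 3 : ℂ) * I := by
  rw [sqrt3, zeta3_eq]; push_cast; ring

lemma conj_sqrt3 : starRingEnd ℂ sqrt3 = -sqrt3 := by
  simp [sqrt3_eq]

lemma normSq_sqrt3 : normSq sqrt3 = 3 := by
  simp [sqrt3_eq, normSq_apply]

lemma sqrt3_ne_zero : sqrt3 ≠ 0 := by
  simp [sqrt3_eq]

lemma conj_zeta3 : starRingEnd ℂ zeta3 = -1 - zeta3 := by
  rw [zeta3_conj]; linear_combination zeta3_quad

lemma intCast_mem_Eis (m : ℤ) : (m : ℂ) ∈ Eis := by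
  exact_mod_cast intCast_mem Eis m

lemma mem_Eis_iff {x : ℂ} : x ∈ Eis ↔ ∃ m n : ℤ, x = m + n * zeta3 := by
  refine ⟨fun hx => ?_, ?_⟩
  · induction hx using Subring.closure_induction with
    | mem y hy => rcases hy with rfl; exact ⟨0, 1, by simp⟩
    | zero => exact ⟨0, 0, by simp⟩
    | one => exact ⟨1, 0, by simp⟩
    | add a b _ _ ha hb =>
        obtain ⟨m, n, rfl⟩ := ha; obtain ⟨p, q, rfl⟩ := hb
        exact ⟨m + p, n + q, by push_cast; ring⟩
    | neg a _ ha =>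
        obtain ⟨m, n, rfl⟩ := ha; exact ⟨-m, -n, by push_cast; ring⟩
    | mul a b _ _ ha hb =>
        obtain ⟨m, n, rfl⟩ := ha; obtain ⟨p, q, rfl⟩ := hb
        refine ⟨m * p - n * q, m * q + n * p - n * q, ?_⟩
        push_cast
        linear_combination (n : ℂ) * q * zeta3_quad
  · rintro ⟨m, n, rfl⟩
    exact Eis.add_mem (intCast_mem_Eis m) (Eis.mul_mem (intCast_mem_Eis n) zeta3_mem_Eis)

lemma exists_add_conj_eq_intCast {z : ℂ} (hz : z ∈ Eis) :
    ∃ a : ℤ, z + starRingEnd ℂ z = a := by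
  obtain ⟨m, n, rfl⟩ := mem_Eis_iff.mp hz
  exact ⟨2 * m - n, by simp only [map_add, map_mul, map_intCast, conj_zeta3]; push_cast; ring⟩

lemma exists_mul_conj_eq_natCast {z : ℂ} (hz : z ∈ Eis) :
    ∃ q : ℕ, z * starRingEnd ℂ z = q := by
  obtain ⟨m, n, rfl⟩ := mem_Eis_iff.mp hz
  refine ⟨(m ^ 2 - m * n + n ^ 2).toNat, ?_⟩
  rw [show (((m ^ 2 - m * n + n ^ 2).toNat : ℕ) : ℂ) = ((m ^ 2 - m * n + n ^ 2 : ℤ) : ℂ) by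
    exact_mod_cast Int.toNat_of_nonneg (by nlinarith [sq_nonneg (m - n)])]
  simp only [map_add, map_mul, map_intCast, conj_zeta3]
  push_cast
  linear_combination (-(n : ℂ) ^ 2) * zeta3_quad

lemma exists_normSq_eq_natCast {z : ℂ} (hz : z ∈ Eis) : ∃ q : ℕ, normSq z = q := by
  obtain ⟨q, hq⟩ := exists_mul_conj_eq_natCast hz
  exact ⟨q, by exact_mod_cast (mul_conj z).symm.trans hq⟩

lemma conj_mem_mulSet_sqrt3 {x : ℂ} (hx : x ∈ mulSet sqrt3) :
    starRingEnd ℂ x ∈ mulSet sqrt3 := by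
  obtain ⟨a, ha, rfl⟩ := hx
  exact ⟨-starRingEnd ℂ a, Eis.neg_mem (Eis_conj_mem ha), by rw [map_mul, conj_sqrt3]; ring⟩

lemma conj_mem_mulSet_three {x : ℂ} (hx : x ∈ mulSet 3) : starRingEnd ℂ x ∈ mulSet 3 := by
  obtain ⟨a, ha, rfl⟩ := hx
  exact ⟨starRingEnd ℂ a, Eis_conj_mem ha, by rw [map_mul, map_ofNat]⟩

lemma normSq_eq_three_mul_of_mem_mulSet_sqrt3 {c : ℂ} (hc : c ∈ mulSet sqrt3) :
    ∃ q : ℕ, normSq c = 3 * q := by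
  obtain ⟨y, hy, rfl⟩ := hc
  obtain ⟨q, hq⟩ := exists_normSq_eq_natCast hy
  exact ⟨q, by rw [normSq_mul, normSq_sqrt3, hq]⟩

lemma normSq_eq_three_mul_add_one_of_sub_one_mem {e : ℂ} (he : e - 1 ∈ mulSet 3) :
    ∃ s : ℤ, normSq e = 3 * s + 1 := by
  obtain ⟨y, hy, hey⟩ := he
  obtain ⟨a, ha⟩ := exists_add_conj_eq_intCast hy
  obtain ⟨q, hq⟩ := exists_mul_conj_eq_natCast hy
  refine ⟨a + 3 * q, ofReal_injective ?_⟩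
  rw [← mul_conj, eq_add_of_sub_eq hey]
  simp only [map_add, map_mul, map_one, map_ofNat]
  push_cast
  linear_combination 3 * ha + 9 * hq

lemma normSq_ne_of_mod_three {c e : ℂ} (hc : c ∈ mulSet sqrt3) (he : e - 1 ∈ mulSet 3) :
    normSq c ≠ normSq e := by
  obtain ⟨q, hq⟩ := normSq_eq_three_mul_of_mem_mulSet_sqrt3 hc
  obtain ⟨s, hs⟩ := normSq_eq_three_mul_add_one_of_sub_one_mem he
  rw [hq, hs]
  intro h
  have : 3 * (q : ℤ) = 3 * s + 1 := by exact_mod_cast h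
  omega

lemma ne_zero_of_sub_one_mem_mulSet_three {e : ℂ} (he : e - 1 ∈ mulSet 3) : e ≠ 0 := by
  rintro rfl
  exact normSq_ne_of_mod_three (mulSet_zero sqrt3) he rfl

lemma eq_one_of_normSq_eq_one {e : ℂ} (he : e - 1 ∈ mulSet 3) (hn : normSq e = 1) : e = 1 := by
  obtain ⟨y, hy, hey⟩ := he
  obtain ⟨q, hq⟩ := exists_normSq_eq_natCast hy
  obtain rfl : e = 1 + 3 * y := by linear_combination hey
  have hre : (1 + 3 * y).re = 1 + 3 * y.re := by simp
  have him : (1 + 3 * y).im = 3 * y.im := by simp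
  rw [normSq_apply, hre, him] at hn
  rw [normSq_apply] at hq
  -- `6 Re y = -9 N(y)` and `(Re y)² ≤ N(y)` force `N(y) ≤ 4/9`
  have hq0 : q = 0 := by
    by_contra h
    have : (1 : ℝ) ≤ q := by exact_mod_cast Nat.one_le_iff_ne_zero.mpr h
    nlinarith [sq_nonneg y.im]
  have : y = 0 := normSq_eq_zero.mp (by rw [normSq_apply, hq, hq0, Nat.cast_zero])
  rw [this]; ring

lemma sq_add_three_mul_sq_le_of_add_three_mul_le {f s : ℝ} (hf0 : 0 ≤ f) (hf1 : f ≤ 1)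
    (hs0 : 0 ≤ s) (hfs : f + 3 * s ≤ 2) : f ^ 2 + 3 * s ^ 2 ≤ 4 / 3 := by
  nlinarith [mul_nonneg hs0 (by linarith : (0:ℝ) ≤ 2 - f - 3 * s),
    mul_nonneg (by linarith : (0:ℝ) ≤ 2 - f) (by linarith : (0:ℝ) ≤ 2 - f - 3 * s),
    mul_nonneg hf0 (by linarith : (0:ℝ) ≤ 1 - f)]

lemma sq_add_three_mul_sq_le_or {f s : ℝ} (hf0 : 0 ≤ f) (hf1 : f ≤ 1) (hs0 : 0 ≤ s)
    (hs1 : s ≤ 1) : f ^ 2 + 3 * s ^ 2 ≤ 4 / 3 ∨ (1 - f) ^ 2 + 3 * (1 - s) ^ 2 ≤ 4 / 3 := by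
  rcases le_or_gt (f + 3 * s) 2 with h | h
  · exact Or.inl (sq_add_three_mul_sq_le_of_add_three_mul_le hf0 hf1 hs0 h)
  · exact Or.inr (sq_add_three_mul_sq_le_of_add_three_mul_le (by linarith) (by linarith)
      (by linarith) (by linarith))

lemma exists_even_add_sq_add_three_mul_sq_le (u v : ℝ) :
    ∃ a b : ℤ, Even (a + b) ∧ (u - a) ^ 2 + 3 * (v - b) ^ 2 ≤ 4 / 3 := by
  set n := ⌊u⌋
  set m := ⌊v⌋
  have hf0 : 0 ≤ u - n := sub_nonneg.mpr (Int.floor_le u)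
  have hf1 : u - n ≤ 1 := by linarith [Int.lt_floor_add_one u]
  have hs0 : 0 ≤ v - m := sub_nonneg.mpr (Int.floor_le v)
  have hs1 : v - m ≤ 1 := by linarith [Int.lt_floor_add_one v]
  rcases Int.even_or_odd (n + m) with ⟨r, hr⟩ | ⟨r, hr⟩
  · rcases sq_add_three_mul_sq_le_or hf0 hf1 hs0 hs1 with h | h
    · exact ⟨n, m, ⟨r, hr⟩, h⟩
    · refine ⟨n + 1, m + 1, ⟨r + 1, by omega⟩, ?_⟩
      push_cast; nlinarith
  · rcases sq_add_three_mul_sq_le_or (f := 1 - (u - n)) (by linarith) (by linarith) hs0 hs1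
      with h | h
    · refine ⟨n + 1, m, ⟨r + 1, by omega⟩, ?_⟩
      push_cast; nlinarith
    · refine ⟨n, m + 1, ⟨r + 1, by omega⟩, ?_⟩
      push_cast; nlinarith

lemma exists_mem_Eis_normSq_sub_le (p : ℂ) : ∃ l ∈ Eis, normSq (p - l) ≤ 1 / 3 := by
  obtain ⟨a, b, ⟨r, hr⟩, hab⟩ :=
    exists_even_add_sq_add_three_mul_sq_le (2 * p.re) (2 * p.im / Real.sqrt 3)
  -- `(a + b√-3)/2 = r + bζ` lies in `ℤ[ζ]` because `a + b = 2r`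
  refine ⟨r + b * zeta3, mem_Eis_iff.mpr ⟨r, b, rfl⟩, ?_⟩
  have h3 : Real.sqrt 3 ^ 2 = 3 := Real.sq_sqrt (by norm_num)
  have hr' : (a : ℝ) + b = r + r := by exact_mod_cast hr
  have hre : (p - (r + b * zeta3)).re = (2 * p.re - a) / 2 := by
    simp [zeta3_eq]; linarith
  have him : (p - (r + b * zeta3)).im = Real.sqrt 3 / 2 * (2 * p.im / Real.sqrt 3 - b) := by
    simp [zeta3_eq]; field_simp
  rw [normSq_apply, hre, him]
  nlinarith

lemma exists_int_abs_add_mul_sqrt_three_le (y : ℝ) :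
    ∃ k : ℤ, |y + k * Real.sqrt 3| ≤ Real.sqrt 3 / 2 := by
  have hs : 0 < Real.sqrt 3 := by positivity
  refine ⟨-round (y / Real.sqrt 3), ?_⟩
  have hy : y + (-round (y / Real.sqrt 3) : ℤ) * Real.sqrt 3
      = (y / Real.sqrt 3 - round (y / Real.sqrt 3)) * Real.sqrt 3 := by
    push_cast; field_simp; ring
  rw [hy, abs_mul, abs_of_pos hs]
  nlinarith [abs_sub_round (y / Real.sqrt 3)]

lemma normSq_le_of_isotropic {c d e : ℂ} (hc : c ≠ 0)
    (hiso : c * starRingEnd ℂ e + d * starRingEnd ℂ d + e * starRingEnd ℂ c = 0)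
    (hd : normSq d ≤ normSq c) (him : |(e / c).im| ≤ Real.sqrt 3 / 2) :
    normSq e ≤ normSq c := by
  set q := e / c
  have he : e = c * q := (mul_div_cancel₀ e hc).symm
  have hcpos : 0 < normSq c := normSq_pos.mpr hc
  have hre : normSq c * (2 * q.re) = -normSq d := by
    rw [he, map_mul] at hiso
    have key : (c * starRingEnd ℂ c) * (q + starRingEnd ℂ q) = -(d * starRingEnd ℂ d) := by
      linear_combination hiso
    rw [mul_conj, mul_conj, add_conj] at key
    exact_mod_cast key
  have hre0 : -(1 / 2) ≤ q.re := by nlinarith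
  have hre1 : q.re ≤ 0 := by nlinarith [normSq_nonneg d]
  have hq : normSq q ≤ 1 := by
    have h3 : Real.sqrt 3 ^ 2 = 3 := Real.sq_sqrt (by norm_num)
    have : q.im ^ 2 ≤ 3 / 4 := by nlinarith [sq_abs q.im, abs_nonneg q.im]
    rw [normSq_apply]
    nlinarith
  calc normSq e = normSq c * normSq q := by rw [he, normSq_mul]
    _ ≤ normSq c := mul_le_of_le_one_right hcpos.le hq

lemma Jmat_two_eq : Jmat 2 = !![0, 0, 1; 0, 1, 0; 1, 0, 0] := by
  ext i j
  fin_cases i <;> fin_cases j <;> simp [Jmat, Fin.last]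

namespace GammaEis

variable {g : SLC 3}

lemma mul_Jmat_mul_conjTranspose (hg : g ∈ GammaEis) : ↑ₘg * Jmat 2 * (↑ₘg)ᴴ = Jmat 2 := by
  set M : Matrix (Fin 3) (Fin 3) ℂ := ↑g
  have hinv : M * (Jmat 2 * Mᴴ * Jmat 2) = 1 := by
    refine mul_eq_one_comm.mp ?_
    rw [Matrix.mul_assoc, Matrix.mul_assoc, ← Matrix.mul_assoc Mᴴ, hg.2, Jmat2_mul_self]
  calc M * Jmat 2 * Mᴴ = M * (Jmat 2 * Mᴴ * Jmat 2) * Jmat 2 := by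
        simp only [Matrix.mul_assoc, Jmat2_mul_self, Matrix.mul_one]
    _ = Jmat 2 := by rw [hinv, Matrix.one_mul]

lemma row_form (hg : g ∈ GammaEis) (i j : Fin 3) :
    ↑ₘg i 0 * starRingEnd ℂ (↑ₘg j 2) + ↑ₘg i 1 * starRingEnd ℂ (↑ₘg j 1)
      + ↑ₘg i 2 * starRingEnd ℂ (↑ₘg j 0) = Jmat 2 i j := by
  rw [← mul_Jmat_mul_conjTranspose hg, Jmat_two_eq]
  simp [mul_apply, Fin.sum_univ_three]
  ring

lemma col_form (hg : g ∈ GammaEis) (i j : Fin 3) :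
    starRingEnd ℂ (↑ₘg 0 i) * ↑ₘg 2 j + starRingEnd ℂ (↑ₘg 1 i) * ↑ₘg 1 j
      + starRingEnd ℂ (↑ₘg 2 i) * ↑ₘg 0 j = Jmat 2 i j := by
  rw [← hg.2, Jmat_two_eq]
  simp [mul_apply, Fin.sum_univ_three]
  ring

lemma isotropic_row_two (hg : g ∈ GammaEis) :
    ↑ₘg 2 0 * starRingEnd ℂ (↑ₘg 2 2) + ↑ₘg 2 1 * starRingEnd ℂ (↑ₘg 2 1)
      + ↑ₘg 2 2 * starRingEnd ℂ (↑ₘg 2 0) = 0 := by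
  simpa [Jmat_two_eq] using row_form hg 2 2

end GammaEis

namespace Upsilon

variable {g : SLC 3}

lemma apply_mem_Eis (hg : g ∈ Upsilon) (i j : Fin 3) : ↑ₘg i j ∈ Eis := hg.1.1.1 i j

lemma apply_mem_mulSet_sqrt3 (hg : g ∈ Upsilon) (i j : Fin 3) (hij : i ≠ j) :
    ↑ₘg i j ∈ mulSet sqrt3 := by
  simpa [one_apply, hij] using hg.1.2 i j

lemma apply_two_two_sub_one_mem (hg : g ∈ Upsilon) : ↑ₘg 2 2 - 1 ∈ mulSet 3 := by
  have h : starRingEnd ℂ (↑ₘg 0 0) * ↑ₘg 2 2 + starRingEnd ℂ (↑ₘg 1 0) * ↑ₘg 1 2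
      + starRingEnd ℂ (↑ₘg 2 0) * ↑ₘg 0 2 = 1 := by
    simpa [Jmat_two_eq] using GammaEis.col_form hg.1.1 0 2
  rw [show ↑ₘg 2 2 - 1 = -(starRingEnd ℂ (↑ₘg 0 0 - 1) * ↑ₘg 2 2)
      + -(starRingEnd ℂ (↑ₘg 1 0) * ↑ₘg 1 2) + -(starRingEnd ℂ (↑ₘg 2 0) * ↑ₘg 0 2) by
    rw [map_sub, map_one]; linear_combination h]
  refine mulSet_add (mulSet_add (mulSet_neg ?_) (mulSet_neg ?_)) (mulSet_neg ?_)
  · exact mulSet_mul_right (conj_mem_mulSet_three hg.2) (apply_mem_Eis hg 2 2)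
  · exact sqrt3_mul_sqrt3
      (conj_mem_mulSet_sqrt3 (apply_mem_mulSet_sqrt3 hg 1 0 (by decide)))
      (apply_mem_mulSet_sqrt3 hg 1 2 (by decide))
  · exact sqrt3_mul_sqrt3
      (conj_mem_mulSet_sqrt3 (apply_mem_mulSet_sqrt3 hg 2 0 (by decide)))
      (apply_mem_mulSet_sqrt3 hg 0 2 (by decide))

lemma transpose_mem (hg : g ∈ Upsilon) : g.transpose ∈ Upsilon := by
  have hJ : (Jmat 2)ᵀ = Jmat 2 := by
    rw [Jmat_two_eq]; ext i j; fin_cases i <;> fin_cases j <;> rfl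
  refine ⟨⟨⟨fun i j => hg.1.1.1 j i, ?_⟩, fun i j => ?_⟩, hg.2⟩
  · have h := congrArg transpose (GammaEis.mul_Jmat_mul_conjTranspose hg.1.1)
    rwa [transpose_mul, transpose_mul, hJ, ← Matrix.mul_assoc] at h
  · simpa [one_apply, eq_comm] using hg.1.2 j i

end Upsilon

def nCorner (z : ℂ) (x : ℤ) : ℂ := (-3 * (z * starRingEnd ℂ z) + (x : ℂ) * sqrt3) / 2

lemma nMat_eq (z : ℂ) (x : ℤ) :
    nMat z x = !![1, sqrt3 * z, nCorner z x; 0, 1, sqrt3 * starRingEnd ℂ z; 0, 0, 1] := rfl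

lemma nCorner_conj (z : ℂ) (x : ℤ) : nCorner (starRingEnd ℂ z) x = nCorner z x := by
  simp [nCorner, mul_comm]

lemma parityOK_conj {z : ℂ} {x : ℤ} (h : parityOK z x) : parityOK (starRingEnd ℂ z) x := by
  simpa [parityOK, mul_comm] using h

lemma nCorner_mem_mulSet_sqrt3 {z : ℂ} {x : ℤ} (hz : z ∈ Eis) (hx : parityOK z x) :
    nCorner z x ∈ mulSet sqrt3 := by
  obtain ⟨y, hy, hxy⟩ := hx
  -- `nCorner z x = N(z)(ζ - 1) + y√-3` and `ζ - 1 = -ζ²√-3`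
  refine ⟨-(z * starRingEnd ℂ z * zeta3 ^ 2) + y,
    Eis.add_mem (Eis.neg_mem (Eis.mul_mem (Eis.mul_mem hz (Eis_conj_mem hz))
      (pow_mem zeta3_mem_Eis 2))) hy, ?_⟩
  rw [nCorner, show (x : ℂ) = z * starRingEnd ℂ z + 2 * y by linear_combination hxy, sqrt3]
  linear_combination (z * starRingEnd ℂ z) * (2 * zeta3_pow_three + zeta3_quad)

lemma exists_parityOK_eq_nCorner {z w : ℂ} (hz : z ∈ Eis) (hw : w ∈ Eis)
    (htr : w + starRingEnd ℂ w = -3 * (z * starRingEnd ℂ z)) :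
    ∃ x, parityOK z x ∧ w = nCorner z x := by
  obtain ⟨m, n, rfl⟩ := mem_Eis_iff.mp hw
  obtain ⟨q, hq⟩ := exists_mul_conj_eq_natCast hz
  have hmn : n = 2 * m + 3 * (q : ℤ) := by
    have : ((n : ℤ) : ℂ) = ((2 * m + 3 * q : ℤ) : ℂ) := by
      simp only [map_add, map_mul, map_intCast, conj_zeta3, hq] at htr
      push_cast; linear_combination -htr
    exact_mod_cast this
  refine ⟨n, ⟨((m + q : ℤ) : ℂ), intCast_mem_Eis _, ?_⟩, ?_⟩
  · rw [hq, hmn]; push_cast; ring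
  · rw [nCorner, hq, sqrt3, hmn]; push_cast; ring

lemma mem_Eis_of_mem_mulSet_sqrt3 {a : ℂ} (ha : a ∈ mulSet sqrt3) : a ∈ Eis := by
  obtain ⟨y, hy, rfl⟩ := ha
  exact Eis.mul_mem sqrt3_mem_Eis hy

lemma nSL_mem_Upsilon {z : ℂ} {x : ℤ} (hz : z ∈ Eis) (hx : parityOK z x) :
    nSL z x ∈ Upsilon := by
  have hcong : ∀ i j, nMat z x i j - (1 : Matrix (Fin 3) (Fin 3) ℂ) i j ∈ mulSet sqrt3 := by
    intro i j
    fin_cases i <;> fin_cases j <;> simp [nMat_eq, one_apply]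
    all_goals first
      | exact mulSet_zero _
      | exact ⟨_, hz, rfl⟩
      | exact ⟨_, Eis_conj_mem hz, rfl⟩
      | exact nCorner_mem_mulSet_sqrt3 hz hx
  refine ⟨⟨⟨fun i j => ?_, ?_⟩, hcong⟩, ?_⟩
  · simpa [nSL] using Eis.add_mem (mem_Eis_of_mem_mulSet_sqrt3 (hcong i j))
      (show (1 : Matrix (Fin 3) (Fin 3) ℂ) i j ∈ Eis by
        rw [one_apply]; split_ifs <;> simp [Eis.one_mem, Eis.zero_mem])
  · ext i j
    fin_cases i <;> fin_cases j <;>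
      simp [nSL, nMat_eq, nCorner, Jmat_two_eq, mul_apply, Fin.sum_univ_three, conj_sqrt3]
    rw [map_ofNat, map_ofNat]
    linear_combination (-(z * starRingEnd ℂ z)) * sqrt3_sq
  · simpa [nSL, nMat_eq] using mulSet_zero 3

lemma ntSL_mem_Upsilon {z : ℂ} {x : ℤ} (hz : z ∈ Eis) (hx : parityOK z x) :
    ntSL z x ∈ Upsilon :=
  Upsilon.transpose_mem (nSL_mem_Upsilon hz hx)

lemma genSet_subset_Upsilon : genSet ⊆ Upsilon := by
  rintro g ⟨z, x, hz, hx, rfl | rfl⟩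
  · exact nSL_mem_Upsilon hz hx
  · exact ntSL_mem_Upsilon hz hx

section MulGenerator

variable (g : SLC 3) (z : ℂ) (x : ℤ) (i : Fin 3)

lemma mul_nSL_apply_zero : ↑ₘ(g * nSL z x) i 0 = ↑ₘg i 0 := by
  rw [Matrix.SpecialLinearGroup.coe_mul, mul_apply, Fin.sum_univ_three]
  simp [nSL, nMat_eq]

lemma mul_nSL_apply_one : ↑ₘ(g * nSL z x) i 1 = ↑ₘg i 1 + ↑ₘg i 0 * (sqrt3 * z) := by
  rw [Matrix.SpecialLinearGroup.coe_mul, mul_apply, Fin.sum_univ_three]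
  simp [nSL, nMat_eq]
  ring

lemma mul_nSL_apply_two :
    ↑ₘ(g * nSL z x) i 2
      = ↑ₘg i 2 + ↑ₘg i 0 * nCorner z x + ↑ₘg i 1 * (sqrt3 * starRingEnd ℂ z) := by
  rw [Matrix.SpecialLinearGroup.coe_mul, mul_apply, Fin.sum_univ_three]
  simp [nSL, nMat_eq]
  ring

lemma mul_ntSL_apply_zero :
    ↑ₘ(g * ntSL z x) i 0 = ↑ₘg i 0 + ↑ₘg i 2 * nCorner z x + ↑ₘg i 1 * (sqrt3 * z) := by
  rw [Matrix.SpecialLinearGroup.coe_mul, mul_apply, Fin.sum_univ_three]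
  simp [ntSL, nMat_eq]
  ring

lemma mul_ntSL_apply_one :
    ↑ₘ(g * ntSL z x) i 1 = ↑ₘg i 1 + ↑ₘg i 2 * (sqrt3 * starRingEnd ℂ z) := by
  rw [Matrix.SpecialLinearGroup.coe_mul, mul_apply, Fin.sum_univ_three]
  simp [ntSL, nMat_eq]

lemma mul_ntSL_apply_two : ↑ₘ(g * ntSL z x) i 2 = ↑ₘg i 2 := by
  rw [Matrix.SpecialLinearGroup.coe_mul, mul_apply, Fin.sum_univ_three]
  simp [ntSL, nMat_eq]

end MulGenerator

-- `(c, d + c√-3 z, e + c·nCorner z x + d√-3 z̄)` is the row `(c, d, e) · n(z, x)`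
lemma exists_reduce_row {c : ℂ} (hc : c ≠ 0) (d e : ℂ) :
    ∃ z ∈ Eis, ∃ x, parityOK z x ∧ normSq (d + c * (sqrt3 * z)) ≤ normSq c ∧
      |((e + c * nCorner z x + d * (sqrt3 * starRingEnd ℂ z)) / c).im| ≤ Real.sqrt 3 / 2 := by
  have hcs : c * sqrt3 ≠ 0 := mul_ne_zero hc sqrt3_ne_zero
  obtain ⟨l, hl, hcov⟩ := exists_mem_Eis_normSq_sub_le (d / (c * sqrt3))
  have hz : -l ∈ Eis := Eis.neg_mem hl
  obtain ⟨n, hn⟩ := exists_mul_conj_eq_natCast hz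
  -- with `x = N(z) + 2k`, the third entry divided by `c` moves by `k√-3`
  obtain ⟨k, hk⟩ := exists_int_abs_add_mul_sqrt_three_le
    (((e + c * (n * (zeta3 - 1)) + d * (sqrt3 * starRingEnd ℂ (-l))) / c).im)
  refine ⟨-l, hz, n + 2 * k, ⟨k, intCast_mem_Eis k, by rw [hn]; push_cast; ring⟩, ?_, ?_⟩
  · rw [show d + c * (sqrt3 * -l) = c * sqrt3 * (d / (c * sqrt3) - l) by
        rw [mul_sub, mul_div_cancel₀ d hcs]; ring,
      normSq_mul, normSq_mul, normSq_sqrt3]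
    nlinarith [normSq_nonneg c]
  · have hcorner : nCorner (-l) (n + 2 * k) = n * (zeta3 - 1) + k * sqrt3 := by
      rw [nCorner, hn, sqrt3]; push_cast; ring
    rw [hcorner, show e + c * (n * (zeta3 - 1) + k * sqrt3) + d * (sqrt3 * starRingEnd ℂ (-l))
      = e + c * (n * (zeta3 - 1)) + d * (sqrt3 * starRingEnd ℂ (-l)) + (k * sqrt3) * c by ring,
      add_div, mul_div_cancel_right₀ _ hc, add_im]
    simpa [sqrt3_eq] using hk

lemma exists_mul_nSL_normSq_lt {g : SLC 3} (hg : g ∈ Upsilon) (hc : ↑ₘg 2 0 ≠ 0) :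
    ∃ z x, z ∈ Eis ∧ parityOK z x ∧ normSq (↑ₘ(g * nSL z x) 2 2) < normSq (↑ₘg 2 0) := by
  obtain ⟨z, hz, x, hx, hd, him⟩ := exists_reduce_row hc (↑ₘg 2 1) (↑ₘg 2 2)
  have hg' := Upsilon.mul_mem hg (nSL_mem_Upsilon hz hx)
  have hiso := GammaEis.isotropic_row_two hg'.1.1
  rw [mul_nSL_apply_zero, mul_nSL_apply_one, mul_nSL_apply_two] at hiso
  refine ⟨z, x, hz, hx, lt_of_le_of_ne ?_ ?_⟩
  · rw [mul_nSL_apply_two]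
    exact normSq_le_of_isotropic hc hiso hd him
  · exact (normSq_ne_of_mod_three (Upsilon.apply_mem_mulSet_sqrt3 hg 2 0 (by decide))
      (Upsilon.apply_two_two_sub_one_mem hg')).symm

lemma exists_mul_ntSL_normSq_le {g : SLC 3} (hg : g ∈ Upsilon) :
    ∃ w x, w ∈ Eis ∧ parityOK w x ∧ normSq (↑ₘ(g * ntSL w x) 2 0) ≤ normSq (↑ₘg 2 2) := by
  have he := ne_zero_of_sub_one_mem_mulSet_three (Upsilon.apply_two_two_sub_one_mem hg)
  -- on the reversed row `(e, d, c)`, right multiplication by `n(z̄,x)ᵀ` acts as `n(z,x)` does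
  obtain ⟨z, hz, x, hx, hd, him⟩ := exists_reduce_row he (↑ₘg 2 1) (↑ₘg 2 0)
  have hz' := Eis_conj_mem hz
  have hx' := parityOK_conj hx
  have hiso := GammaEis.isotropic_row_two (Upsilon.mul_mem hg (ntSL_mem_Upsilon hz' hx')).1.1
  rw [mul_ntSL_apply_zero, mul_ntSL_apply_one, mul_ntSL_apply_two, nCorner_conj,
    conj_conj] at hiso
  refine ⟨_, x, hz', hx', ?_⟩
  rw [mul_ntSL_apply_zero, nCorner_conj]
  refine normSq_le_of_isotropic he ?_ hd him
  linear_combination hiso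

lemma exists_genSet_mul_normSq_lt {g : SLC 3} (hg : g ∈ Upsilon) (hc : ↑ₘg 2 0 ≠ 0) :
    ∃ a ∈ genSet, ∃ b ∈ genSet, normSq (↑ₘ(g * a * b) 2 0) < normSq (↑ₘg 2 0) := by
  obtain ⟨z, x, hz, hx, hlt⟩ := exists_mul_nSL_normSq_lt hg hc
  obtain ⟨w, y, hw, hy, hle⟩ :=
    exists_mul_ntSL_normSq_le (Upsilon.mul_mem hg (nSL_mem_Upsilon hz hx))
  exact ⟨_, ⟨z, x, hz, hx, Or.inl rfl⟩, _, ⟨w, y, hw, hy, Or.inr rfl⟩, hle.trans_lt hlt⟩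

lemma eq_nSL_of_apply_two_zero_eq_zero {g : SLC 3} (hg : g ∈ Upsilon) (hc : ↑ₘg 2 0 = 0) :
    ∃ z x, z ∈ Eis ∧ parityOK z x ∧ g = nSL z x := by
  have row := GammaEis.row_form hg.1.1
  have col := GammaEis.col_form hg.1.1
  have hd : ↑ₘg 2 1 = 0 := by
    simpa [hc] using GammaEis.isotropic_row_two hg.1.1
  have hea : ↑ₘg 2 2 * starRingEnd ℂ (↑ₘg 0 0) = 1 := by
    simpa [hc, hd, Jmat_two_eq] using row 2 0
  -- `e ā = 1` makes `e` a unit, and the only unit `≡ 1 mod 3` is `1`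
  have he : ↑ₘg 2 2 = 1 := by
    refine eq_one_of_normSq_eq_one (Upsilon.apply_two_two_sub_one_mem hg) ?_
    obtain ⟨p, hp⟩ := exists_normSq_eq_natCast (Upsilon.apply_mem_Eis hg 2 2)
    obtain ⟨q, hq⟩ := exists_normSq_eq_natCast (Upsilon.apply_mem_Eis hg 0 0)
    have hpq := congrArg normSq hea
    rw [normSq_mul, normSq_conj, hp, hq, normSq_one] at hpq
    rw [hp, Nat.eq_one_of_mul_eq_one_right (by exact_mod_cast hpq : p * q = 1), Nat.cast_one]
  have ha : ↑ₘg 0 0 = 1 := by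
    have h : starRingEnd ℂ (↑ₘg 0 0) = 1 := by simpa [he] using hea
    simpa using congrArg (starRingEnd ℂ) h
  have h10 : ↑ₘg 1 0 = 0 := by
    simpa [hc, hd, he, Jmat_two_eq] using row 2 1
  have h11 : ↑ₘg 1 1 = 1 := by
    have := g.prop
    rw [det_fin_three, hc, hd, ha, h10, he] at this
    simpa using this
  obtain ⟨z, hz, h01⟩ := Upsilon.apply_mem_mulSet_sqrt3 hg 0 1 (by decide)
  have h12 : ↑ₘg 1 2 = sqrt3 * starRingEnd ℂ z := by
    have := col 1 2
    simp [hd, he, h11, Jmat_two_eq, h01, conj_sqrt3] at this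
    linear_combination this
  have htr : ↑ₘg 0 2 + starRingEnd ℂ (↑ₘg 0 2) = -3 * (z * starRingEnd ℂ z) := by
    have := col 2 2
    simp [he, h12, Jmat_two_eq, conj_sqrt3] at this
    linear_combination this + z * starRingEnd ℂ z * sqrt3_sq
  obtain ⟨x, hx, h02⟩ := exists_parityOK_eq_nCorner hz (Upsilon.apply_mem_Eis hg 0 2) htr
  refine ⟨z, x, hz, hx, Subtype.ext ?_⟩
  ext i j
  fin_cases i <;> fin_cases j <;> simp [nSL, nMat_eq, *]

lemma mem_closure_genSet_of_normSq_eq (n : ℕ) :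
    ∀ {g : SLC 3}, g ∈ Upsilon → normSq (↑ₘg 2 0) = n → g ∈ Subgroup.closure genSet := by
  induction n using Nat.strong_induction_on with
  | _ n ih =>
    intro g hg hn
    by_cases hc : ↑ₘg 2 0 = 0
    · obtain ⟨z, x, hz, hx, rfl⟩ := eq_nSL_of_apply_two_zero_eq_zero hg hc
      exact Subgroup.subset_closure ⟨z, x, hz, hx, Or.inl rfl⟩
    · obtain ⟨a, ha, b, hb, hlt⟩ := exists_genSet_mul_normSq_lt hg hc
      have hgab : g * a * b ∈ Upsilon :=
        mul_mem (mul_mem hg (genSet_subset_Upsilon ha)) (genSet_subset_Upsilon hb)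
      obtain ⟨m, hm⟩ := exists_normSq_eq_natCast (Upsilon.apply_mem_Eis hgab 2 0)
      have hmn : m < n := by
        rw [hm, hn] at hlt
        exact_mod_cast hlt
      rw [show g = g * a * b * b⁻¹ * a⁻¹ by group]
      exact mul_mem (mul_mem (ih m hmn hgab hm) (inv_mem (Subgroup.subset_closure hb)))
        (inv_mem (Subgroup.subset_closure ha))

/-- The group `Υ` is generated by the matrices `n(z,x)` and their
transposes `n(z,x)ᵀ`, for `z ∈ ℤ[ζ]` and `x ∈ ℤ` with `x ≡ N(z) mod 2`. -/
theorem statement10 : Subgroup.closure genSet = Upsilon := by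
  refine le_antisymm ((Subgroup.closure_le _).2 genSet_subset_Upsilon) fun g hg => ?_
  obtain ⟨n, hn⟩ := exists_normSq_eq_natCast (Upsilon.apply_mem_Eis hg 2 0)
  exact mem_closure_genSet_of_normSq_eq n hg hn

end
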